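/- Let p be prime, s ≥ 3, and let S(q) denote the number of solutions (x1,...,xs) modulo q of the simultaneous congruences λ1x1² + ... + λsxs² ≡ 0 and λ1x1 + ... + λsxs ≡ 0 (mod q). With V(q) as the normalized complete exponential sum q^{−s} Σ_{gcd(a1,a2,q)=1} Π_i V(q, λ_i a1, λ_i a2), one has for every k ≥ 0 the identity Σ_{l=0}^{k} V(p^l) = p^{(2−s)k} S(p^k). -/

import Mathlib

/-!
Sum `∏ᵢ V(q, λᵢ a₁, λᵢ a₂)` over all pairs `(a₁, a₂)` modulo `q` in two ways. Expanding the
product and using orthogonality of additive characters gives `q² S(q)`. Grouping the pairs by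
`d = gcd(a₁, a₂, q)`, writing `q = d m` and `a = d b` with `gcd(b₁, b₂, m) = 1`, and using
`V(d m, d c₁, d c₂) = d V(m, c₁, c₂)` gives `q^s ∑_{m ∣ q} V(m)`. For `q = p^k` the divisors
are the `p^l` with `l ≤ k`.
-/

open Finset Complex

noncomputable def Vloc10 (q : ℕ) (b1 b2 : ℤ) : ℂ :=
  ∑ r ∈ Finset.Icc 1 q,
    Complex.exp (2 * Real.pi * Complex.I * (((b2 * r ^ 2 + b1 * r : ℤ) : ℝ) / q))

noncomputable def Vnorm10 (s : ℕ) (lam : Fin s → ℤ) (q : ℕ) : ℂ :=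
  (q : ℂ) ^ (-(s : ℤ)) *
    ∑ a ∈ (Finset.Icc 1 q ×ˢ Finset.Icc 1 q).filter
        (fun a => Nat.gcd a.1 (Nat.gcd a.2 q) = 1),
      ∏ i, Vloc10 q (lam i * a.1) (lam i * a.2)

theorem AddChar.map_sum_eq_prod {ι A M : Type*} [AddCommMonoid A] [CommMonoid M]
    (ψ : AddChar A M) (s : Finset ι) (f : ι → A) : ψ (∑ i ∈ s, f i) = ∏ i ∈ s, ψ (f i) := by
  induction s using Finset.cons_induction with
  | empty => simp
  | cons a s ha ih => rw [sum_cons, prod_cons, map_add_eq_mul, ih]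

theorem AddChar.sum_sum_prod_sum_eq_card_sq_mul_card {R ι : Type*} [CommRing R] [Fintype R]
    [DecidableEq R] [Fintype ι] {ψ : AddChar R ℂ} (hψ : ψ.IsPrimitive) (lam : ι → R) :
    ∑ a₁ : R, ∑ a₂ : R, ∏ i, ∑ x : R, ψ (lam i * a₂ * x ^ 2 + lam i * a₁ * x) =
      (Fintype.card R : ℂ) ^ 2 *
        Nat.card {x : ι → R // ∑ i, lam i * x i ^ 2 = 0 ∧ ∑ i, lam i * x i = 0} := by
  classical
  have hchar : ∀ (a₁ a₂ : R) (x : ι → R), ∏ i, ψ (lam i * a₂ * x i ^ 2 + lam i * a₁ * x i) =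
      ψ (a₁ * ∑ i, lam i * x i) * ψ (a₂ * ∑ i, lam i * x i ^ 2) := by
    intro a₁ a₂ x
    rw [← map_add_eq_mul, ← AddChar.map_sum_eq_prod, mul_sum, mul_sum, ← sum_add_distrib]
    congr 1
    exact sum_congr rfl fun i _ => by ring
  simp_rw [Fintype.prod_sum, hchar]
  calc _ = ∑ x : ι → R, (∑ a₁ : R, ψ (a₁ * ∑ i, lam i * x i)) *
        ∑ a₂ : R, ψ (a₂ * ∑ i, lam i * x i ^ 2) := by
        simp only [sum_mul_sum]
        exact (sum_congr rfl fun _ _ => sum_comm).trans sum_comm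
    _ = ∑ x : ι → R, if ∑ i, lam i * x i ^ 2 = 0 ∧ ∑ i, lam i * x i = 0 then
          (Fintype.card R : ℂ) ^ 2 else 0 := by
        simp only [AddChar.sum_mulShift _ hψ]
        refine sum_congr rfl fun x _ => ?_
        split_ifs <;> simp_all [sq]
    _ = _ := by
        rw [sum_ite, sum_const_zero, add_zero, sum_const, nsmul_eq_mul, mul_comm,
          Nat.card_eq_fintype_card, Fintype.card_subtype]

theorem Finset.sum_Icc_one_eq_sum_zmod {M : Type*} [AddCommMonoid M] (q : ℕ) [NeZero q]
    {f : ℕ → M} {g : ZMod q → M} (hfg : ∀ r, f r = g r) : ∑ r ∈ Icc 1 q, f r = ∑ x, g x := by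
  have hmod : ∀ r ∈ Icc 1 q, r % q = if r = q then 0 else r := fun r hr => by
    rw [mem_Icc] at hr
    split_ifs with h
    · simp [h]
    · exact Nat.mod_eq_of_lt (by omega)
  refine sum_nbij (Nat.cast) (fun _ _ => mem_univ _) (fun r hr r' hr' h => ?_)
    (fun x _ => ?_) (fun r _ => hfg r)
  · rw [ZMod.natCast_eq_natCast_iff', hmod r hr, hmod r' hr'] at h
    have := mem_Icc.1 hr; have := mem_Icc.1 hr'
    split_ifs at h <;> omega
  · by_cases hx : x = 0
    · exact ⟨q, mem_Icc.2 ⟨NeZero.one_le, le_rfl⟩, by simp [hx]⟩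
    · exact ⟨x.val, mem_Icc.2 ⟨Nat.one_le_iff_ne_zero.2 ((ZMod.val_ne_zero x).2 hx),
        (ZMod.val_lt x).le⟩, ZMod.natCast_zmod_val x⟩

theorem Vloc10_eq_sum_Icc_stdAddChar (q : ℕ) [NeZero q] (b₁ b₂ : ℤ) :
    Vloc10 q b₁ b₂ = ∑ r ∈ Icc 1 q, ZMod.stdAddChar ((b₂ * r ^ 2 + b₁ * r : ℤ) : ZMod q) := by
  refine sum_congr rfl fun r _ => ?_
  rw [ZMod.stdAddChar_coe, mul_div_assoc]
  push_cast
  rfl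

theorem Vloc10_eq_sum_zmod (q : ℕ) [NeZero q] (b₁ b₂ : ℤ) :
    Vloc10 q b₁ b₂ = ∑ r : ZMod q,
      ZMod.stdAddChar ((b₂ : ZMod q) * r ^ 2 + (b₁ : ZMod q) * r) := by
  rw [Vloc10_eq_sum_Icc_stdAddChar]
  exact sum_Icc_one_eq_sum_zmod q fun r => by push_cast; rfl

theorem Function.Periodic.sum_Icc_one_mul {M : Type*} [AddCommMonoid M] {f : ℕ → M} {m : ℕ}
    (hf : Function.Periodic f m) (d : ℕ) :
    ∑ r ∈ Icc 1 (m * d), f r = d • ∑ r ∈ Icc 1 m, f r := by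
  have hIcc : ∀ n, ∑ r ∈ Icc 1 n, f r = ∑ r ∈ range n, f (r + 1) := fun n => by
    rw [range_eq_Ico, sum_Ico_add' f 0 n 1]; rfl
  simp only [hIcc]
  induction d with
  | zero => simp
  | succ d ih =>
    rw [Nat.mul_succ, sum_range_add, ih, succ_nsmul]
    congr 1
    refine sum_congr rfl fun r _ => ?_
    simpa [add_comm, add_left_comm, add_assoc, mul_comm] using hf.nat_mul d (r + 1)

theorem Vloc10_mul (d m : ℕ) [NeZero d] [NeZero m] (c₁ c₂ : ℤ) :
    Vloc10 (d * m) (d * c₁) (d * c₂) = d * Vloc10 m c₁ c₂ := by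
  rw [Vloc10_eq_sum_Icc_stdAddChar, Vloc10_eq_sum_Icc_stdAddChar]
  have hcancel : ∀ r : ℕ, ZMod.stdAddChar ((d * c₂ * r ^ 2 + d * c₁ * r : ℤ) : ZMod (d * m)) =
      ZMod.stdAddChar ((c₂ * r ^ 2 + c₁ * r : ℤ) : ZMod m) := fun r => by
    rw [ZMod.stdAddChar_coe, ZMod.stdAddChar_coe]
    have := NeZero.ne (d : ℂ)
    congr 1
    push_cast
    field_simp
  have hper :
      Function.Periodic (fun r : ℕ => ZMod.stdAddChar ((c₂ * r ^ 2 + c₁ * r : ℤ) : ZMod m)) m :=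
    fun r => by push_cast; simp
  simp only [hcancel]
  rw [mul_comm d m, hper.sum_Icc_one_mul, nsmul_eq_mul]

theorem Finset.sum_Icc_one_sq_eq_sum_divisorsAntidiagonal {M : Type*} [AddCommMonoid M] {q : ℕ}
    (hq : q ≠ 0) (F : ℕ × ℕ → M) :
    ∑ a ∈ Icc 1 q ×ˢ Icc 1 q, F a =
      ∑ dm ∈ q.divisorsAntidiagonal,
        ∑ b ∈ (Icc 1 dm.2 ×ˢ Icc 1 dm.2).filter (fun b => Nat.gcd b.1 (Nat.gcd b.2 dm.2) = 1),
          F (dm.1 * b.1, dm.1 * b.2) := by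
  rw [sum_sigma']
  set D : ℕ × ℕ → ℕ := fun a => Nat.gcd a.1 (Nat.gcd a.2 q)
  have hD₁ (a : ℕ × ℕ) : D a ∣ a.1 := Nat.gcd_dvd_left _ _
  have hD₂ (a : ℕ × ℕ) : D a ∣ a.2 := (Nat.gcd_dvd_right _ _).trans (Nat.gcd_dvd_left _ _)
  have hmul (a : ℕ × ℕ) : (D a * (a.1 / D a), D a * (a.2 / D a)) = a := by
    rw [Nat.mul_div_cancel' (hD₁ a), Nat.mul_div_cancel' (hD₂ a)]
  refine sum_nbij' (fun a => ⟨(D a, q / D a), (a.1 / D a, a.2 / D a)⟩)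
    (fun x => (x.1.1 * x.2.1, x.1.1 * x.2.2)) ?_ ?_ (fun a _ => hmul a) ?_
    (fun a _ => by rw [hmul a])
  · intro a ha
    simp only [mem_product, mem_Icc] at ha
    have hDq : D a ∣ q := (Nat.gcd_dvd_right _ _).trans (Nat.gcd_dvd_right _ _)
    have hD : 0 < D a := Nat.pos_of_dvd_of_pos (hD₁ a) (by omega)
    have hprim : Nat.gcd (a.1 / D a) (Nat.gcd (a.2 / D a) (q / D a)) = 1 := by
      rw [Nat.gcd_div (hD₂ a) hDq]
      exact Nat.coprime_div_gcd_div_gcd hD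
    simp only [mem_sigma, Nat.mem_divisorsAntidiagonal, mem_filter, mem_product, mem_Icc]
    refine ⟨⟨Nat.mul_div_cancel' hDq, hq⟩, ⟨⟨?_, ?_⟩, ?_, ?_⟩, hprim⟩
    · exact Nat.div_pos (Nat.le_of_dvd (by omega) (hD₁ a)) hD
    · exact Nat.div_le_div_right ha.1.2
    · exact Nat.div_pos (Nat.le_of_dvd (by omega) (hD₂ a)) hD
    · exact Nat.div_le_div_right ha.2.2
  · rintro ⟨⟨d, m⟩, b⟩ hx
    simp only [mem_sigma, Nat.mem_divisorsAntidiagonal, mem_filter, mem_product, mem_Icc] at hx ⊢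
    obtain ⟨⟨rfl, -⟩, ⟨⟨hb₁, hb₁'⟩, hb₂, hb₂'⟩, -⟩ := hx
    have hd : 0 < d := Nat.pos_of_ne_zero (left_ne_zero_of_mul hq)
    refine ⟨⟨?_, ?_⟩, ?_, ?_⟩ <;> nlinarith
  · rintro ⟨⟨d, m⟩, b⟩ hx
    simp only [mem_sigma, Nat.mem_divisorsAntidiagonal, mem_filter, mem_product, mem_Icc] at hx
    obtain ⟨⟨rfl, -⟩, -, hb⟩ := hx
    have hDd : D (d * b.1, d * b.2) = d := by
      simp only [D, Nat.gcd_mul_left, hb, mul_one]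
    simp only [hDd, Nat.mul_div_cancel_left _ (Nat.pos_of_ne_zero (left_ne_zero_of_mul hq))]

theorem sum_Icc_one_sq_prod_Vloc10 {s : ℕ} (lam : Fin s → ℤ) (q : ℕ) [NeZero q] :
    ∑ a ∈ Icc 1 q ×ˢ Icc 1 q, ∏ i, Vloc10 q (lam i * a.1) (lam i * a.2) =
      (q : ℂ) ^ 2 * Nat.card {x : Fin s → ZMod q //
        ∑ i, (lam i : ZMod q) * x i ^ 2 = 0 ∧ ∑ i, (lam i : ZMod q) * x i = 0} := by
  have h := AddChar.sum_sum_prod_sum_eq_card_sq_mul_card (ZMod.isPrimitive_stdAddChar q)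
    (fun i => (lam i : ZMod q))
  rw [ZMod.card] at h
  rw [← h, sum_product]
  refine sum_Icc_one_eq_sum_zmod q fun a₁ => sum_Icc_one_eq_sum_zmod q fun a₂ => ?_
  simp only [Vloc10_eq_sum_zmod, Int.cast_mul, Int.cast_natCast]

theorem natCast_pow_mul_Vnorm10 {s : ℕ} (lam : Fin s → ℤ) {m : ℕ} (hm : m ≠ 0) :
    (m : ℂ) ^ s * Vnorm10 s lam m =
      ∑ b ∈ (Icc 1 m ×ˢ Icc 1 m).filter (fun b => Nat.gcd b.1 (Nat.gcd b.2 m) = 1),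
        ∏ i, Vloc10 m (lam i * b.1) (lam i * b.2) := by
  rw [Vnorm10, ← mul_assoc, zpow_neg, zpow_natCast,
    mul_inv_cancel₀ (pow_ne_zero _ (Nat.cast_ne_zero.2 hm)), one_mul]

theorem prod_Vloc10_mul {s : ℕ} (lam : Fin s → ℤ) (d m : ℕ) [NeZero d] [NeZero m] (b₁ b₂ : ℕ) :
    ∏ i, Vloc10 (d * m) (lam i * ↑(d * b₁)) (lam i * ↑(d * b₂)) =
      (d : ℂ) ^ s * ∏ i, Vloc10 m (lam i * b₁) (lam i * b₂) := by
  have hscale : ∀ i, Vloc10 (d * m) (lam i * ↑(d * b₁)) (lam i * ↑(d * b₂)) =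
      d * Vloc10 m (lam i * b₁) (lam i * b₂) := fun i => by
    rw [← Vloc10_mul]
    congr 1 <;> push_cast <;> ring
  rw [prod_congr rfl fun i _ => hscale i, prod_mul_distrib, prod_const, card_univ,
    Fintype.card_fin]

theorem sum_Icc_one_sq_prod_Vloc10_eq_sum_divisors {s : ℕ} (lam : Fin s → ℤ) {q : ℕ}
    (hq : q ≠ 0) :
    ∑ a ∈ Icc 1 q ×ˢ Icc 1 q, ∏ i, Vloc10 q (lam i * a.1) (lam i * a.2) =
      (q : ℂ) ^ s * ∑ m ∈ q.divisors, Vnorm10 s lam m := by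
  rw [sum_Icc_one_sq_eq_sum_divisorsAntidiagonal hq, mul_sum,
    ← Nat.sum_divisorsAntidiagonal' (fun _ m => (q : ℂ) ^ s * Vnorm10 s lam m)]
  refine sum_congr rfl fun ⟨d, m⟩ hdm => ?_
  obtain ⟨rfl, -⟩ := Nat.mem_divisorsAntidiagonal.1 hdm
  have : NeZero d := ⟨left_ne_zero_of_mul hq⟩
  have : NeZero m := ⟨right_ne_zero_of_mul hq⟩
  simp only [prod_Vloc10_mul, ← mul_sum, ← natCast_pow_mul_Vnorm10 lam (NeZero.ne m)]
  push_cast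
  ring

theorem sum_divisors_Vnorm10 {s : ℕ} (lam : Fin s → ℤ) {q : ℕ} (hq : q ≠ 0) :
    ∑ m ∈ q.divisors, Vnorm10 s lam m =
      (q : ℂ) ^ ((2 : ℤ) - s) * Nat.card {x : Fin s → ZMod q //
        ∑ i, (lam i : ZMod q) * x i ^ 2 = 0 ∧ ∑ i, (lam i : ZMod q) * x i = 0} := by
  have : NeZero q := ⟨hq⟩
  have h := sum_Icc_one_sq_prod_Vloc10 lam q
  rw [sum_Icc_one_sq_prod_Vloc10_eq_sum_divisors lam hq] at h
  have hq' : (q : ℂ) ≠ 0 := Nat.cast_ne_zero.2 hq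
  rw [zpow_sub₀ hq', zpow_natCast, div_mul_eq_mul_div, eq_div_iff (pow_ne_zero _ hq'), mul_comm]
  exact h

theorem stmt_10_general (p : ℕ) (hp : p.Prime) (s : ℕ)
    (lam : Fin s → ℤ) (k : ℕ) :
    ∑ l ∈ Finset.range (k + 1), Vnorm10 s lam (p ^ l) =
      (p : ℂ) ^ (((2 : ℤ) - s) * k) *
        (Nat.card {x : Fin s → ZMod (p ^ k) //
          ∑ i, (lam i : ZMod (p ^ k)) * (x i) ^ 2 = 0 ∧
          ∑ i, (lam i : ZMod (p ^ k)) * x i = 0} : ℂ) := by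
  rw [← Nat.sum_divisors_prime_pow hp, sum_divisors_Vnorm10 lam (pow_ne_zero k hp.ne_zero),
    Nat.cast_pow, ← zpow_natCast, ← zpow_mul, mul_comm (k : ℤ)]

theorem stmt_10 (p : ℕ) (hp : p.Prime) (s : ℕ) (hs : 3 ≤ s)
    (lam : Fin s → ℤ) (hlam : ∀ i, lam i ≠ 0) (k : ℕ) :
    ∑ l ∈ Finset.range (k + 1), Vnorm10 s lam (p ^ l) =
      (p : ℂ) ^ (((2 : ℤ) - s) * k) *
        (Nat.card {x : Fin s → ZMod (p ^ k) //
          ∑ i, (lam i : ZMod (p ^ k)) * (x i) ^ 2 = 0 ∧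
          ∑ i, (lam i : ZMod (p ^ k)) * x i = 0} : ℂ) :=
  stmt_10_general p hp s lam k
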